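/- Let (M, ω) be a compact symplectic manifold and let 𝔥𝔞𝔪(M,ω) ≅ C^∞(M)/ℝ be the Lie algebra of Hamiltonian vector fields. The trilinear form β_M(X_f, X_g, X_h) := (3/π³) ∫_M f {g,h} ω^n is well-defined (independent of the representatives f, g, h modulo constants), alternating, and is a Lie algebra 3-cocycle: for all quadruples of Hamiltonian vector fields, the Chevalley–Eilenberg differential of β_M vanishes. -/
import Mathlib


/-!
Statement 6: On a compact symplectic manifold `(M, ω)`, the trilinear form
`β_M(X_f, X_g, X_h) := (3/π³) ∫_M f {g,h} ωⁿ` on the Lie algebra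
`𝔥𝔞𝔪(M,ω) ≅ C^∞(M)/ℝ` of Hamiltonian vector fields is well defined (independent of the
representatives modulo constants), alternating, and a Chevalley–Eilenberg Lie algebra
3-cocycle.

Formalization note: as integration of forms is unavailable in Mathlib, the geometric input
is encoded by its characteristic data: `C` is `C^∞(M)`, `X f` is `φ ↦ X_f(φ)`
(so `{f,g} = X f g`), `integral` is `∫_M · ωⁿ`, `stokes` is `∫_M X_f(φ) ωⁿ = 0`
(Liouville + Stokes), `hconst` says `X_{f+c} = X_f` for constants `c`, `antisymm` is the
antisymmetry of the Poisson bracket, and `jacobi` is `X_{{f,g}} = [X_f, X_g]`.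
-/

theorem betaM_three_cocycle
    {C : Type*} [CommRing C] [Algebra ℝ C]
    (X : C → C →ₗ[ℝ] C)
    (leibniz : ∀ f g h : C, X f (g * h) = X f g * h + g * X f h)
    (hconst : ∀ (f : C) (c : ℝ), X (f + algebraMap ℝ C c) = X f)
    (antisymm : ∀ f g : C, X f g = - X g f)
    (jacobi : ∀ f g h : C, X (X f g) h = X f (X g h) - X g (X f h))
    (integral : C →ₗ[ℝ] ℝ)
    (stokes : ∀ f φ : C, integral (X f φ) = 0)
    (β : C → C → C → ℝ)
    (hβ : ∀ f g h : C, β f g h = (3 / Real.pi ^ 3) * integral (f * X g h)) :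
    -- β is well defined on `C^∞(M)/ℝ ≅ 𝔥𝔞𝔪(M,ω)`: adding constants does not change it
    (∀ (c : ℝ) (f g h : C),
      β (f + algebraMap ℝ C c) g h = β f g h ∧
      β f (g + algebraMap ℝ C c) h = β f g h ∧
      β f g (h + algebraMap ℝ C c) = β f g h) ∧
    -- β is alternating
    (∀ f g : C, β f f g = 0 ∧ β f g g = 0 ∧ β f g f = 0) ∧
    -- β is a Chevalley–Eilenberg 3-cocycle:
    -- Σ_{i<j} (-1)^{i+j} β({f_i,f_j}, …, f̂_i, …, f̂_j, …) = 0
    (∀ f₁ f₂ f₃ f₄ : C,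
      - β (X f₁ f₂) f₃ f₄ + β (X f₁ f₃) f₂ f₄ - β (X f₁ f₄) f₂ f₃
      - β (X f₂ f₃) f₁ f₄ + β (X f₂ f₄) f₁ f₃ - β (X f₃ f₄) f₁ f₂ = 0) := by
  -- Hamiltonian vector fields kill constants: `X f 1 = 0`
  have hXone : ∀ f : C, X f 1 = 0 := by
    intro f
    have h : X f 1 = X f 1 + X f 1 := by
      have := leibniz f 1 1
      simpa using this
    have h' : X f 1 + 0 = X f 1 + X f 1 := by rw [add_zero]; exact h
    exact (add_left_cancel h').symm
  have hXc : ∀ (f : C) (c : ℝ), X f (algebraMap ℝ C c) = 0 := by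
    intro f c
    rw [Algebra.algebraMap_eq_smul_one, map_smul, hXone, smul_zero]
  -- `{f, f} = 0`
  have hXself : ∀ f : C, X f f = 0 := by
    intro f
    have h := antisymm f f
    have h2 : (2 : ℝ) • X f f = 0 := by
      rw [two_smul]; nth_rewrite 1 [h]; exact neg_add_cancel _
    have : X f f = (2 : ℝ)⁻¹ • ((2 : ℝ) • X f f) := by
      rw [smul_smul]; norm_num
    rw [this, h2, smul_zero]
  -- integration by parts (invariance of the pairing)
  have ibp : ∀ a b c : C, integral (X a b * c) = - integral (b * X a c) := by
    intro a b c
    have h := stokes a (b * c)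
    rw [leibniz, map_add] at h
    linarith
  refine ⟨?_, ?_, ?_⟩
  · -- well-definedness
    intro c f g h
    refine ⟨?_, ?_, ?_⟩
    · rw [hβ, hβ, add_mul, map_add, Algebra.algebraMap_eq_smul_one, smul_mul_assoc,
        one_mul, map_smul, stokes, smul_zero, add_zero]
    · rw [hβ, hβ, hconst]
    · rw [hβ, hβ, map_add, mul_add, map_add, hXc, mul_zero, map_zero, add_zero]
  · -- alternating
    intro f g
    refine ⟨?_, ?_, ?_⟩
    · rw [hβ]
      have h1 : integral (X f f * g) = - integral (f * X f g) := ibp f f g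
      rw [hXself, zero_mul, map_zero] at h1
      have : integral (f * X f g) = 0 := by linarith
      rw [this, mul_zero]
    · rw [hβ, hXself, mul_zero, map_zero, mul_zero]
    · rw [hβ]
      have h1 : integral (X g f * f) = - integral (f * X g f) := ibp g f f
      rw [mul_comm] at h1
      have : integral (f * X g f) = 0 := by linarith
      rw [this, mul_zero]
  · -- 3-cocycle identity
    intro f₁ f₂ f₃ f₄
    -- symmetry of the pairing of brackets
    have F2 : ∀ a b c d : C, integral (X a b * X c d) = integral (X c d * X a b) := by
      intro a b c d; rw [mul_comm]
    -- integration by parts for bracket pairings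
    have F1 : ∀ a b c d : C, integral (X a b * X c d) = - integral (b * X a (X c d)) :=
      fun a b c d => ibp a b (X c d)
    -- Jacobi identity under the integral
    have F3 : ∀ a b c d : C, integral (a * X b (X c d))
        = - integral (a * X d (X b c)) + integral (a * X c (X b d)) := by
      intro a b c d
      have hj : X b (X c d) = X (X b c) d + X c (X b d) := by
        rw [jacobi]; ring
      rw [hj, antisymm (X b c) d, mul_add, mul_neg, map_add, map_neg]
    have h12 : integral (X f₂ f₃ * X f₁ f₄) = integral (X f₁ f₄ * X f₂ f₃) := F2 _ _ _ _
    have h13 : integral (X f₂ f₄ * X f₁ f₃) = integral (X f₁ f₃ * X f₂ f₄) := F2 _ _ _ _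
    have h14 : integral (X f₃ f₄ * X f₁ f₂) = integral (X f₁ f₂ * X f₃ f₄) := F2 _ _ _ _
    have g1 := F1 f₁ f₂ f₃ f₄
    have g2 := F1 f₁ f₃ f₂ f₄
    have g3 := F1 f₁ f₄ f₂ f₃
    have g4 := F3 f₄ f₁ f₂ f₃
    have g5 := F1 f₃ f₄ f₁ f₂
    have g6 := F1 f₂ f₄ f₁ f₃
    have key : - integral (X f₁ f₂ * X f₃ f₄) + integral (X f₁ f₃ * X f₂ f₄)
        - integral (X f₁ f₄ * X f₂ f₃) - integral (X f₂ f₃ * X f₁ f₄)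
        + integral (X f₂ f₄ * X f₁ f₃) - integral (X f₃ f₄ * X f₁ f₂) = 0 := by
      linarith
    rw [hβ, hβ, hβ, hβ, hβ, hβ]
    linear_combination (3 / Real.pi ^ 3) * key
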